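/- For every positive integer n, the cluster V_n = {φ ∈ 𝒢 : φ(u) = u(0) for all u ∈ 𝒜_n} is an ideal of the commutative ring 𝒢 of characters: V_n is an additive subgroup of (𝒢, ⊕, θ), and for every character φ ∈ 𝒢 and every ψ ∈ V_n the dot-convolution φ⊙ψ belongs to V_n. -/

import Mathlib

open Function

noncomputable section

/-- The subalgebra of `ℤ → ℂ` consisting of all periodic functions. -/
def PerFun : Subalgebra ℂ (ℤ → ℂ) where
  carrier := {u | ∃ p : ℤ, 0 < p ∧ Function.Periodic u p}
  add_mem' := by
    rintro u v ⟨p, hp, hu⟩ ⟨q, hq, hv⟩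
    refine ⟨p * q, mul_pos hp hq, ?_⟩
    have hu' : Function.Periodic u (p * q) := by simpa [mul_comm] using hu.int_mul q
    have hv' : Function.Periodic v (p * q) := hv.int_mul p
    exact hu'.add hv'
  mul_mem' := by
    rintro u v ⟨p, hp, hu⟩ ⟨q, hq, hv⟩
    refine ⟨p * q, mul_pos hp hq, ?_⟩
    have hu' : Function.Periodic u (p * q) := by simpa [mul_comm] using hu.int_mul q
    have hv' : Function.Periodic v (p * q) := hv.int_mul p
    exact hu'.mul hv'
  one_mem' := ⟨1, one_pos, fun _ => rfl⟩
  zero_mem' := ⟨1, one_pos, fun _ => rfl⟩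
  algebraMap_mem' := fun c => ⟨1, one_pos, fun _ => rfl⟩

/-- `u` belongs to the subalgebra `𝒜_p` of `p`-periodic functions. -/
def InAp (p : ℤ) (u : ↥PerFun) : Prop := Function.Periodic (u : ℤ → ℂ) p

/-- A character of the algebra `𝒜` of periodic functions: a nonzero
`ℂ`-linear multiplicative functional. -/
def IsChar (ψ : ↥PerFun → ℂ) : Prop :=
  (∀ u v, ψ (u + v) = ψ u + ψ v) ∧
  (∀ (c : ℂ) (u), ψ (c • u) = c * ψ u) ∧
  (∀ u v, ψ (u * v) = ψ u * ψ v) ∧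
  ψ ≠ 0

lemma shiftAdd_mem (u : ↥PerFun) (x : ℤ) :
    (fun y => (u : ℤ → ℂ) (x + y)) ∈ PerFun := by
  obtain ⟨p, hp, hu⟩ := u.2
  refine ⟨p, hp, fun y => ?_⟩
  show (u : ℤ → ℂ) (x + (y + p)) = (u : ℤ → ℂ) (x + y)
  rw [← add_assoc]
  exact hu (x + y)

/-- For `u ∈ 𝒜`, the function `y ↦ u (x + y)`, as an element of `𝒜`. -/
def shiftAdd (u : ↥PerFun) (x : ℤ) : ↥PerFun :=
  ⟨fun y => (u : ℤ → ℂ) (x + y), shiftAdd_mem u x⟩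

lemma shiftMul_mem (u : ↥PerFun) (x : ℤ) :
    (fun y => (u : ℤ → ℂ) (x * y)) ∈ PerFun := by
  obtain ⟨p, hp, hu⟩ := u.2
  refine ⟨p, hp, fun y => ?_⟩
  show (u : ℤ → ℂ) (x * (y + p)) = (u : ℤ → ℂ) (x * y)
  rw [mul_add]
  exact (hu.int_mul x) (x * y)

/-- For `u ∈ 𝒜`, the function `y ↦ u (x * y)`, as an element of `𝒜`. -/
def shiftMul (u : ↥PerFun) (x : ℤ) : ↥PerFun :=
  ⟨fun y => (u : ℤ → ℂ) (x * y), shiftMul_mem u x⟩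

lemma negArg_mem (u : ↥PerFun) :
    (fun y => (u : ℤ → ℂ) (-y)) ∈ PerFun := by
  obtain ⟨p, hp, hu⟩ := u.2
  refine ⟨p, hp, fun y => ?_⟩
  show (u : ℤ → ℂ) (-(y + p)) = (u : ℤ → ℂ) (-y)
  rw [neg_add, ← sub_eq_add_neg]
  exact hu.sub_eq (-y)

/-- For `u ∈ 𝒜`, the function `x ↦ u (-x)`, as an element of `𝒜`. -/
def negArg (u : ↥PerFun) : ↥PerFun :=
  ⟨fun y => (u : ℤ → ℂ) (-y), negArg_mem u⟩

lemma plusInner_mem (ψ : ↥PerFun → ℂ) (u : ↥PerFun) :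
    (fun x => ψ (shiftAdd u x)) ∈ PerFun := by
  obtain ⟨p, hp, hu⟩ := u.2
  refine ⟨p, hp, fun x => ?_⟩
  show ψ (shiftAdd u (x + p)) = ψ (shiftAdd u x)
  congr 1
  apply Subtype.ext
  funext y
  show (u : ℤ → ℂ) (x + p + y) = (u : ℤ → ℂ) (x + y)
  rw [show x + p + y = x + y + p by ring]
  exact hu (x + y)

lemma dotInner_mem (ψ : ↥PerFun → ℂ) (u : ↥PerFun) :
    (fun x => ψ (shiftMul u x)) ∈ PerFun := by
  obtain ⟨p, hp, hu⟩ := u.2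
  refine ⟨p, hp, fun x => ?_⟩
  show ψ (shiftMul u (x + p)) = ψ (shiftMul u x)
  congr 1
  apply Subtype.ext
  funext y
  show (u : ℤ → ℂ) ((x + p) * y) = (u : ℤ → ℂ) (x * y)
  rw [show (x + p) * y = x * y + y * p by ring]
  exact (hu.int_mul y) (x * y)

/-- The plus-convolution `(φ ⊕ ψ)(u) = φ (x ↦ ψ (y ↦ u (x + y)))`. -/
def plusConv (φ ψ : ↥PerFun → ℂ) : ↥PerFun → ℂ :=
  fun u => φ ⟨fun x => ψ (shiftAdd u x), plusInner_mem ψ u⟩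

/-- The dot-convolution `(φ ⊙ ψ)(u) = φ (x ↦ ψ (y ↦ u (x * y)))`. -/
def dotConv (φ ψ : ↥PerFun → ℂ) : ↥PerFun → ℂ :=
  fun u => φ ⟨fun x => ψ (shiftMul u x), dotInner_mem ψ u⟩

/-- The reflection `(⊖ φ)(u) = φ (x ↦ u (-x))`. -/
def reflect (φ : ↥PerFun → ℂ) : ↥PerFun → ℂ :=
  fun u => φ (negArg u)

/-- The functional `θ : u ↦ u 0`. -/
def theta : ↥PerFun → ℂ := fun u => (u : ℤ → ℂ) 0

/-- The functional `ε : u ↦ u 1`. -/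
def eps : ↥PerFun → ℂ := fun u => (u : ℤ → ℂ) 1


/-- The cluster `V_n = {φ ∈ 𝒢 : φ u = u 0 for all u ∈ 𝒜_n}`. -/
def Vcl (n : ℤ) : Set (↥PerFun → ℂ) :=
  {φ | IsChar φ ∧ ∀ u, InAp n u → φ u = (u : ℤ → ℂ) 0}

/-!
Characters of `𝒜` are exactly the `ℂ`-algebra maps `𝒜 → ℂ`, and `u ↦ (x ↦ ψ (y ↦ u (x + y)))`,
`u ↦ (x ↦ ψ (y ↦ u (x * y)))` and `u ↦ (x ↦ u (-x))` are `ℂ`-algebra endomorphisms of `𝒜` when `ψ` is a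
character; composing them with a character `φ` gives `φ ⊕ ψ`, `φ ⊙ ψ` and `⊖ φ`, which are therefore
characters. Precomposing with `x + ·`, `x * ·` or `-·` keeps `𝒜_n` stable, so for `ψ ∈ V_n` and
`u ∈ 𝒜_n` we get `ψ (y ↦ u (x + y)) = u x` and `ψ (y ↦ u (x * y)) = u 0`: the inner function of
`φ ⊕ ψ` is `u` itself and that of `φ ⊙ ψ` is the constant `u 0`.
-/

namespace IsChar

variable {φ : PerFun → ℂ}

theorem map_one (h : IsChar φ) : φ 1 = 1 := by
  obtain ⟨-, -, hmul, hne⟩ := h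
  have hidem : IsIdempotentElem (φ 1) := by rw [IsIdempotentElem, ← hmul, one_mul]
  refine (IsIdempotentElem.iff_eq_zero_or_one.mp hidem).resolve_left fun h0 =>
    hne (funext fun u => ?_)
  rw [← mul_one u, hmul, h0, mul_zero, Pi.zero_apply]

def toAlgHom (h : IsChar φ) : PerFun →ₐ[ℂ] ℂ :=
  AlgHom.ofLinearMap ⟨⟨φ, h.1⟩, h.2.1⟩ h.map_one h.2.2.1

theorem map_algebraMap (h : IsChar φ) (c : ℂ) : φ (algebraMap ℂ PerFun c) = c :=
  h.toAlgHom.commutes c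

end IsChar

theorem isChar_algHom (f : PerFun →ₐ[ℂ] ℂ) : IsChar f :=
  ⟨map_add f, map_smul f, map_mul f, fun h => one_ne_zero (α := ℂ) (by simpa [h] using map_one f)⟩

theorem IsChar.comp {φ : PerFun → ℂ} (hφ : IsChar φ) (T : PerFun →ₐ[ℂ] PerFun) :
    IsChar (φ ∘ T) :=
  isChar_algHom (hφ.toAlgHom.comp T)

theorem isChar_theta : IsChar theta :=
  isChar_algHom ((Pi.evalAlgHom ℂ (fun _ : ℤ => ℂ) 0).comp PerFun.val)

def precompAlgHom (g : ℤ → ℤ) (hg : ∀ u : PerFun, (u : ℤ → ℂ) ∘ g ∈ PerFun) :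
    PerFun →ₐ[ℂ] PerFun :=
  ((AlgHom.pi fun y => Pi.evalAlgHom ℂ (fun _ : ℤ => ℂ) (g y)).comp PerFun.val).codRestrict
    PerFun hg

theorem InAp.precomp {n : ℤ} {u : PerFun} (hu : InAp n u) {g : ℤ → ℤ}
    (hg : ∀ u : PerFun, (u : ℤ → ℂ) ∘ g ∈ PerFun) (hgn : ∀ y, ∃ k : ℤ, g (y + n) = g y + k * n) :
    InAp n (precompAlgHom g hg u) := fun y => by
  obtain ⟨k, hk⟩ := hgn y
  show (u : ℤ → ℂ) (g (y + n)) = (u : ℤ → ℂ) (g y)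
  simpa [hk] using hu.int_mul k (g y)

theorem apply_precomp_of_mem_Vcl {n : ℤ} {ψ : PerFun → ℂ} (hψ : ψ ∈ Vcl n) {u : PerFun}
    (hu : InAp n u) {g : ℤ → ℤ} (hg : ∀ u : PerFun, (u : ℤ → ℂ) ∘ g ∈ PerFun)
    (hgn : ∀ y, ∃ k : ℤ, g (y + n) = g y + k * n) :
    ψ (precompAlgHom g hg u) = (u : ℤ → ℂ) (g 0) :=
  hψ.2 _ (hu.precomp hg hgn)

theorem isChar_conv {φ ψ : PerFun → ℂ} (hφ : IsChar φ) (hψ : IsChar ψ)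
    (S : ℤ → PerFun →ₐ[ℂ] PerFun) (hS : ∀ u, (fun x => ψ (S x u)) ∈ PerFun) :
    IsChar fun u => φ ⟨fun x => ψ (S x u), hS u⟩ :=
  hφ.comp ((AlgHom.pi fun x => hψ.toAlgHom.comp (S x)).codRestrict PerFun hS)

theorem isChar_plusConv {φ ψ : PerFun → ℂ} (hφ : IsChar φ) (hψ : IsChar ψ) :
    IsChar (plusConv φ ψ) :=
  isChar_conv hφ hψ (fun x => precompAlgHom (x + ·) (shiftAdd_mem · x)) (plusInner_mem ψ)

theorem isChar_dotConv {φ ψ : PerFun → ℂ} (hφ : IsChar φ) (hψ : IsChar ψ) :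
    IsChar (dotConv φ ψ) :=
  isChar_conv hφ hψ (fun x => precompAlgHom (x * ·) (shiftMul_mem · x)) (dotInner_mem ψ)

theorem isChar_reflect {φ : PerFun → ℂ} (hφ : IsChar φ) : IsChar (reflect φ) :=
  hφ.comp (precompAlgHom Neg.neg negArg_mem)

section Vcl

variable {n : ℤ} {φ ψ : PerFun → ℂ}

theorem theta_mem_Vcl : theta ∈ Vcl n :=
  ⟨isChar_theta, fun _ _ => rfl⟩

theorem plusConv_mem_Vcl (hφ : φ ∈ Vcl n) (hψ : ψ ∈ Vcl n) : plusConv φ ψ ∈ Vcl n := by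
  refine ⟨isChar_plusConv hφ.1 hψ.1, fun u hu => ?_⟩
  have hinner : (⟨fun x => ψ (shiftAdd u x), plusInner_mem ψ u⟩ : PerFun) = u :=
    Subtype.ext <| funext fun x => (apply_precomp_of_mem_Vcl hψ hu (shiftAdd_mem · x)
      fun y => ⟨1, by ring⟩).trans (by rw [add_zero])
  exact (congrArg φ hinner).trans (hφ.2 u hu)

theorem reflect_mem_Vcl (hφ : φ ∈ Vcl n) : reflect φ ∈ Vcl n :=
  ⟨isChar_reflect hφ.1, fun _ hu =>
    apply_precomp_of_mem_Vcl hφ hu negArg_mem fun y => ⟨-1, by ring⟩⟩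

theorem dotConv_mem_Vcl (hφ : IsChar φ) (hψ : ψ ∈ Vcl n) : dotConv φ ψ ∈ Vcl n := by
  refine ⟨isChar_dotConv hφ hψ.1, fun u hu => ?_⟩
  have hinner : (⟨fun x => ψ (shiftMul u x), dotInner_mem ψ u⟩ : PerFun)
      = algebraMap ℂ PerFun ((u : ℤ → ℂ) 0) :=
    Subtype.ext <| funext fun x => (apply_precomp_of_mem_Vcl hψ hu (shiftMul_mem · x)
      fun y => ⟨x, by ring⟩).trans (by rw [mul_zero]; rfl)
  exact (congrArg φ hinner).trans (hφ.map_algebraMap _)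

end Vcl

theorem cluster_is_ideal_general (n : ℤ) :
    theta ∈ Vcl n ∧
    (∀ φ ψ, φ ∈ Vcl n → ψ ∈ Vcl n → plusConv φ ψ ∈ Vcl n) ∧
    (∀ φ, φ ∈ Vcl n → reflect φ ∈ Vcl n) ∧
    (∀ φ ψ, IsChar φ → ψ ∈ Vcl n → dotConv φ ψ ∈ Vcl n) :=
  ⟨theta_mem_Vcl, fun _ _ => plusConv_mem_Vcl, fun _ => reflect_mem_Vcl,
    fun _ _ => dotConv_mem_Vcl⟩

/-- For every positive integer `n`, the cluster `V_n` is an ideal of the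
commutative ring `𝒢` of characters: it is an additive subgroup (contains `θ`,
closed under `⊕` and the reflection `⊖`), and it absorbs multiplication `⊙`
by arbitrary characters. -/
theorem cluster_is_ideal (n : ℤ) (hn : 0 < n) :
    theta ∈ Vcl n ∧
    (∀ φ ψ, φ ∈ Vcl n → ψ ∈ Vcl n → plusConv φ ψ ∈ Vcl n) ∧
    (∀ φ, φ ∈ Vcl n → reflect φ ∈ Vcl n) ∧
    (∀ φ ψ, IsChar φ → ψ ∈ Vcl n → dotConv φ ψ ∈ Vcl n) :=
  cluster_is_ideal_general n

end
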